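/- arXiv:math/9908067 — 3 statements merged into one kernel-verified Lean document; each statement's English description precedes it below -/
import Mathlib

section
/- The double zeta value ζ(2,1) = Σ_{n>m>0} 1/(n²m) equals ζ(3) = Σ_{n>0} 1/n³. -/
noncomputable def zeta1 (k : ℕ) : ℝ := ∑' n : ℕ+, 1 / (n : ℝ) ^ k

noncomputable def zeta2 (a b : ℕ) : ℝ :=
  ∑' p : {p : ℕ × ℕ // p.2 < p.1 ∧ 0 < p.2},
    1 / ((p.val.1 : ℝ) ^ a * (p.val.2 : ℝ) ^ b)

/-!
Euler's argument. By the partial fraction `1/(ab(a+b)) = 1/(a(a+b)²) + 1/(b(a+b)²)` and the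
substitution `(n, m) = (a + b, a)`, the symmetric series `∑_{a,b ≥ 1} 1/(ab(a+b))` equals
`2 ζ(2,1)`. Summing it over `b` first instead telescopes, as `1/(b(a+b)) = (1/b - 1/(a+b))/a`,
to `∑_a H_a/a²`; splitting off the last term `1/a` of `H_a` leaves `ζ(2,1) + ζ(3)`.
-/

open Finset Filter Topology

theorem Antitone.hasSum_sub_add {u : ℕ → ℝ} (hu : Antitone u)
    (hlim : Tendsto u atTop (𝓝 0)) (k : ℕ) :
    HasSum (fun n ↦ u n - u (n + k)) (∑ i ∈ range k, u i) := by
  rw [hasSum_iff_tendsto_nat_of_nonneg fun n ↦ sub_nonneg.2 (hu (Nat.le_add_right n k))]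
  have hpartial (N : ℕ) : ∑ n ∈ range N, (u n - u (n + k)) =
      ∑ i ∈ range k, u i - ∑ i ∈ range k, u (N + i) := by
    have h₁ := sum_range_add u N k
    have h₂ := sum_range_add u k N
    rw [add_comm k N] at h₂
    simp only [sum_sub_distrib, add_comm _ k]
    linarith
  have htail : Tendsto (fun N ↦ ∑ i ∈ range k, u (N + i)) atTop (𝓝 0) := by
    simpa using tendsto_finsetSum (range k) fun i _ ↦ hlim.comp (tendsto_add_atTop_nat i)
  simpa [hpartial] using tendsto_const_nhds.sub htail

theorem hasSum_one_div_sub_one_div_add (a : ℕ) :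
    HasSum (fun b : ℕ+ ↦ 1 / (b : ℝ) - 1 / (b + a)) (harmonic a) := by
  rw [hasSum_pnat_iff_hasSum_succ (f := fun b : ℕ ↦ 1 / (b : ℝ) - 1 / (b + a))]
  have hu : Antitone fun n : ℕ ↦ 1 / ((n : ℝ) + 1) :=
    fun m n hmn ↦ one_div_le_one_div_of_le (by positivity) (by gcongr)
  convert hu.hasSum_sub_add tendsto_one_div_add_atTop_nhds_zero_nat a using 1
  · funext n
    push_cast
    ring
  · simp [harmonic]

theorem one_div_mul_mul_add_eq {x y : ℝ} (hx : x ≠ 0) (hy : y ≠ 0) (hxy : x + y ≠ 0) :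
    1 / (x * y * (x + y)) = 1 / ((x + y) ^ 2 * x) + 1 / ((y + x) ^ 2 * y) := by
  rw [add_comm y x]
  field_simp
  ring

theorem hasSum_one_div_mul_mul_add (a : ℕ+) :
    HasSum (fun b : ℕ+ ↦ 1 / ((a : ℝ) * b * (a + b))) (harmonic a / (a : ℝ) ^ 2) := by
  rw [div_eq_inv_mul, ← one_div]
  refine ((hasSum_one_div_sub_one_div_add a).mul_left _).congr_fun fun b ↦ ?_
  field_simp
  ring

theorem one_div_mul_mul_add_le {x y : ℝ} (hx : 0 < x) (hy : 0 < y) :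
    1 / (x * y * (x + y)) ≤ (x ^ (3 / 2 : ℝ))⁻¹ * (y ^ (3 / 2 : ℝ))⁻¹ := by
  have hsqrt : √(x * y) ≤ x + y := Real.sqrt_le_iff.2 ⟨by positivity, by nlinarith⟩
  have hrpow : (x * y) ^ (3 / 2 : ℝ) = x * y * √(x * y) := by
    rw [show (3 / 2 : ℝ) = 1 + 1 / 2 by norm_num, Real.rpow_add (by positivity), Real.rpow_one,
      Real.sqrt_eq_rpow]
  rw [← mul_inv, ← Real.mul_rpow hx.le hy.le, one_div, hrpow]
  gcongr

theorem summable_one_div_mul_mul_add :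
    Summable fun p : ℕ+ × ℕ+ ↦ 1 / ((p.1 : ℝ) * p.2 * (p.1 + p.2)) := by
  have h : Summable fun n : ℕ+ ↦ ((n : ℝ) ^ (3 / 2 : ℝ))⁻¹ :=
    summable_pnat_iff_summable_nat.2 (Real.summable_nat_rpow_inv.2 (by norm_num))
  refine .of_nonneg_of_le (fun p ↦ by positivity)
    (fun p ↦ one_div_mul_mul_add_le (by positivity) (by positivity))
    (h.mul_of_nonneg h (fun _ ↦ by positivity) (fun _ ↦ by positivity))

noncomputable def zeta2Summand (a b : ℕ) (p : ℕ × ℕ) : ℝ := 1 / ((p.1 : ℝ) ^ a * (p.2 : ℝ) ^ b)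

def doubleZetaIndexEquiv : ℕ+ × ℕ+ ≃ {p : ℕ × ℕ // p.2 < p.1 ∧ 0 < p.2} where
  toFun p := ⟨(p.1 + p.2, p.1), Nat.lt_add_of_pos_right p.2.pos, p.1.pos⟩
  invFun q := (⟨q.1.2, q.2.2⟩, ⟨q.1.1 - q.1.2, Nat.sub_pos_of_lt q.2.1⟩)
  left_inv _ := Prod.ext rfl (PNat.eq (Nat.add_sub_cancel_left ..))
  right_inv q := by ext <;> simp [Nat.add_sub_cancel' q.2.1.le]

theorem hasSum_zeta2Summand_iff_pnat (a b : ℕ) (s : ℝ) :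
    HasSum (fun p : {p : ℕ × ℕ // p.2 < p.1 ∧ 0 < p.2} ↦ zeta2Summand a b p.1) s ↔
      HasSum (fun p : ℕ+ × ℕ+ ↦ 1 / (((p.1 : ℝ) + p.2) ^ a * (p.1 : ℝ) ^ b)) s := by
  rw [← doubleZetaIndexEquiv.hasSum_iff]
  simp [Function.comp_def, doubleZetaIndexEquiv, zeta2Summand]

theorem hasSum_zeta2_two_one :
    HasSum (fun p : {p : ℕ × ℕ // p.2 < p.1 ∧ 0 < p.2} ↦ zeta2Summand 2 1 p.1) (zeta2 2 1) := by
  have hle (p : ℕ+ × ℕ+) :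
      1 / (((p.1 : ℝ) + p.2) ^ 2 * p.1) ≤ 1 / ((p.1 : ℝ) * p.2 * (p.1 + p.2)) := by
    rw [one_div_mul_mul_add_eq (by positivity) (by positivity) (by positivity)]
    simp only [le_add_iff_nonneg_right]
    positivity
  obtain ⟨s, hs⟩ := summable_one_div_mul_mul_add.of_nonneg_of_le (fun _ ↦ by positivity) hle
  -- `zeta2 2 1` is, by definition, the sum of this series
  exact ((hasSum_zeta2Summand_iff_pnat 2 1 s).2 (by simpa only [pow_one] using hs)).summable.hasSum

theorem hasSum_two_mul_zeta2_two_one :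
    HasSum (fun p : ℕ+ × ℕ+ ↦ 1 / ((p.1 : ℝ) * p.2 * (p.1 + p.2))) (2 * zeta2 2 1) := by
  have hG : HasSum (fun p : ℕ+ × ℕ+ ↦ 1 / (((p.1 : ℝ) + p.2) ^ 2 * p.1)) (zeta2 2 1) := by
    simpa only [pow_one] using (hasSum_zeta2Summand_iff_pnat 2 1 _).1 hasSum_zeta2_two_one
  have hG_swap := (Equiv.prodComm ℕ+ ℕ+).hasSum_iff.2 hG
  rw [two_mul]
  exact (hG.add hG_swap).congr_fun fun p ↦
    one_div_mul_mul_add_eq (by positivity) (by positivity) (by positivity)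

theorem hasSum_sum_Ioo_zeta2Summand_of_hasSum {a b : ℕ} {s : ℝ}
    (h : HasSum (fun p : {p : ℕ × ℕ // p.2 < p.1 ∧ 0 < p.2} ↦ zeta2Summand a b p.1) s) :
    HasSum (fun n : ℕ ↦ ∑ m ∈ Ioo 0 n, zeta2Summand a b (n, m)) s := by
  set S : Set (ℕ × ℕ) := {p | p.2 < p.1 ∧ 0 < p.2}
  have hmem {n m : ℕ} : (n, m) ∈ S ↔ m ∈ Ioo 0 n := by simp [S, and_comm]
  refine ((hasSum_subtype_iff_indicator (f := zeta2Summand a b) (s := S)).1 h).prod_fiberwise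
    fun n ↦ ?_
  rw [← sum_congr rfl fun m hm ↦ Set.indicator_of_mem (hmem.2 hm) (zeta2Summand a b)]
  exact hasSum_sum_of_ne_finset_zero fun m hm ↦ Set.indicator_of_notMem (mt hmem.1 hm) _

theorem harmonic_div_sq_eq_sum_Ioo_zeta2Summand_add {n : ℕ} (hn : 0 < n) :
    harmonic n / (n : ℝ) ^ 2 = ∑ m ∈ Ioo 0 n, zeta2Summand 2 1 (n, m) + 1 / (n : ℝ) ^ 3 := by
  have hIcc : Icc 1 n = insert n (Ioo 0 n) := by
    rw [Ioo_insert_right hn, ← Icc_add_one_left_eq_Ioc, zero_add]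
  rw [harmonic_eq_sum_Icc, hIcc, sum_insert right_notMem_Ioo]
  push_cast
  rw [add_div, sum_div, add_comm _ (∑ _ ∈ _, _)]
  congr 1
  · exact sum_congr rfl fun m _ ↦ by simp [zeta2Summand, div_eq_mul_inv, mul_comm]
  · ring

theorem zeta_two_one : zeta2 2 1 = zeta1 3 := by
  have h₁ : HasSum (fun n : ℕ+ ↦ (harmonic n : ℝ) / (n : ℝ) ^ 2) (2 * zeta2 2 1) :=
    hasSum_two_mul_zeta2_two_one.prod_fiberwise hasSum_one_div_mul_mul_add
  have h₂ : HasSum (fun n : ℕ+ ↦ ∑ m ∈ Ioo 0 (n : ℕ), zeta2Summand 2 1 (n, m)) (zeta2 2 1) := by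
    refine (hasSum_pnat_iff (f := fun n : ℕ ↦ ∑ m ∈ Ioo 0 n, zeta2Summand 2 1 (n, m))).2 ?_
    simpa using hasSum_sum_Ioo_zeta2Summand_of_hasSum hasSum_zeta2_two_one
  have h₃ : HasSum (fun n : ℕ+ ↦ 1 / (n : ℝ) ^ 3) (zeta1 3) :=
    (summable_pnat_iff_summable_nat.2 (Real.summable_one_div_nat_pow.2 (by norm_num))).hasSum
  have h₄ := (h₂.add h₃).congr_fun fun n ↦ harmonic_div_sq_eq_sum_Ioo_zeta2Summand_add n.pos
  linarith [h₁.unique h₄]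
end

section
/- The double zeta value ζ(3,1) equals (3/2)ζ(4) − (1/2)ζ(2)², which equals π⁴/360. -/
/-!
The series `ζ(2)² = ∑_{m,n ≥ 1} 1/(m² n²)` splits into double zeta values in two ways.
Splitting the index set into `m > n`, `m < n` and `m = n` gives the stuffle relation
`ζ(2)² = 2 ζ(2,2) + ζ(4)`; the partial fraction decomposition of `1/(m² n²)` in terms of `m + n`
gives the shuffle relation `ζ(2)² = 2 ζ(2,2) + 4 ζ(3,1)`. Hence `ζ(3,1) = ζ(4)/4`, and Euler's
values `ζ(2) = π²/6`, `ζ(4) = π⁴/90` give the rest.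
-/

theorem summable_one_div_pnat_pow {k : ℕ} (hk : 1 < k) : Summable fun n : ℕ+ ↦ 1 / (n : ℝ) ^ k :=
  (Real.summable_one_div_nat_pow.mpr hk).comp_injective PNat.coe_injective

theorem zeta1_eq_of_hasSum {k : ℕ} (hk : k ≠ 0) {c : ℝ}
    (h : HasSum (fun n : ℕ ↦ 1 / (n : ℝ) ^ k) c) : zeta1 k = c := by
  rw [zeta1, tsum_pnat_eq_tsum_of_eq_zero (f := fun n : ℕ ↦ 1 / (n : ℝ) ^ k) (by simp [hk]),
    h.tsum_eq]

noncomputable def pnatPairTrichotomyEquiv : (ℕ+ × ℕ+) ⊕ (ℕ+ × ℕ+) ⊕ ℕ+ ≃ ℕ+ × ℕ+ :=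
  Equiv.ofBijective
    (Sum.elim (fun p ↦ (p.1 + p.2, p.2)) (Sum.elim (fun p ↦ (p.2, p.1 + p.2)) fun n ↦ (n, n)))
    ⟨by
      rintro (⟨k, n⟩ | ⟨k, n⟩ | n) (⟨k', n'⟩ | ⟨k', n'⟩ | n') h <;>
        simp only [Sum.elim_inl, Sum.elim_inr, Prod.ext_iff, ← PNat.coe_inj, PNat.add_coe,
          Sum.inl.injEq, Sum.inr.injEq, reduceCtorEq] at h ⊢ <;> grind [PNat.pos],
     by
      rintro ⟨m, n⟩
      rcases lt_trichotomy n m with h | rfl | h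
      · exact ⟨.inl (m - n, n), by simp [PNat.sub_add_of_lt h]⟩
      · exact ⟨.inr (.inr n), rfl⟩
      · exact ⟨.inr (.inl (n - m, m)), by simp [PNat.sub_add_of_lt h]⟩⟩

theorem tsum_pnat_prod_eq_add_add_diag {α : Type*} [AddCommGroup α] [UniformSpace α]
    [IsUniformAddGroup α] [CompleteSpace α] [T2Space α] {f : ℕ+ × ℕ+ → α} (hf : Summable f) :
    ∑' p, f p = ∑' p : ℕ+ × ℕ+, f (p.1 + p.2, p.2) + ∑' p : ℕ+ × ℕ+, f (p.2, p.1 + p.2)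
      + ∑' n : ℕ+, f (n, n) := by
  have hf' := hf.comp_injective pnatPairTrichotomyEquiv.injective
  rw [← pnatPairTrichotomyEquiv.tsum_eq,
    Summable.tsum_sum (f := fun c ↦ f (pnatPairTrichotomyEquiv c))
    (hf'.comp_injective Sum.inl_injective) (hf'.comp_injective Sum.inr_injective),
    Summable.tsum_sum (f := fun c ↦ f (pnatPairTrichotomyEquiv (.inr c)))
    (hf'.comp_injective (Sum.inr_injective.comp Sum.inl_injective))
    (hf'.comp_injective (Sum.inr_injective.comp Sum.inr_injective)), add_assoc]
  rfl

theorem hasSum_zeta1_mul_zeta1 {a b : ℕ} (ha : 1 < a) (hb : 1 < b) :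
    HasSum (fun p : ℕ+ × ℕ+ ↦ 1 / ((p.1 : ℝ) ^ a * (p.2 : ℝ) ^ b)) (zeta1 a * zeta1 b) := by
  have hsa := summable_one_div_pnat_pow ha
  have hsb := summable_one_div_pnat_pow hb
  simpa only [zeta1, one_div_mul_one_div] using hsa.hasSum.mul hsb.hasSum
    (summable_mul_of_summable_norm hsa.norm hsb.norm)

/-- The term of `zeta2 a b` at the index `(k + n, n)`, as a function of `(k, n)`. -/
noncomputable def zeta2Term (a b : ℕ) (p : ℕ+ × ℕ+) : ℝ :=
  1 / (((p.1 : ℝ) + p.2) ^ a * (p.2 : ℝ) ^ b)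

def pnatProdEquivLt : ℕ+ × ℕ+ ≃ {p : ℕ × ℕ // p.2 < p.1 ∧ 0 < p.2} where
  toFun q := ⟨((q.1 : ℕ) + q.2, q.2), Nat.lt_add_of_pos_left q.1.pos, q.2.pos⟩
  invFun p := (⟨p.1.1 - p.1.2, Nat.sub_pos_of_lt p.2.1⟩, ⟨p.1.2, p.2.2⟩)
  left_inv q := Prod.ext (PNat.eq (by simp)) rfl
  right_inv p := by ext <;> simp; omega

theorem zeta2_eq_tsum_zeta2Term (a b : ℕ) : zeta2 a b = ∑' p, zeta2Term a b p := by
  rw [zeta2, ← pnatProdEquivLt.tsum_eq]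
  simp [pnatProdEquivLt, zeta2Term]

theorem zeta2_eq_tsum_zeta2Term_swap (a b : ℕ) :
    zeta2 a b = ∑' p : ℕ+ × ℕ+, zeta2Term a b p.swap := by
  rw [zeta2_eq_tsum_zeta2Term, ← (Equiv.prodComm ℕ+ ℕ+).tsum_eq]
  rfl

theorem zeta1_mul_zeta1 {a b : ℕ} (ha : 1 < a) (hb : 1 < b) :
    zeta1 a * zeta1 b = zeta2 a b + zeta2 b a + zeta1 (a + b) := by
  have h := hasSum_zeta1_mul_zeta1 ha hb
  rw [← h.tsum_eq, tsum_pnat_prod_eq_add_add_diag h.summable, zeta2_eq_tsum_zeta2Term,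
    zeta2_eq_tsum_zeta2Term, zeta1]
  simp only [zeta2Term, PNat.add_coe, Nat.cast_add, mul_comm, pow_add]

theorem zeta2Term_le_one_div_pow_mul_pow (a b : ℕ) (p : ℕ+ × ℕ+) :
    zeta2Term a b p ≤ 1 / ((p.1 : ℝ) ^ a * (p.2 : ℝ) ^ b) := by
  unfold zeta2Term
  gcongr
  exact le_add_of_nonneg_right (by positivity)

theorem zeta2Term_succ_le (a b : ℕ) (p : ℕ+ × ℕ+) :
    zeta2Term (a + 1) b p ≤ zeta2Term a (b + 1) p := by
  unfold zeta2Term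
  gcongr 1 / ?_
  rw [pow_succ, pow_succ, mul_right_comm, mul_assoc]
  gcongr
  exact le_add_of_nonneg_left (by positivity)

theorem summable_zeta2Term {a b : ℕ} (ha : 1 < a) (hb : 1 < b) : Summable (zeta2Term a b) :=
  (hasSum_zeta1_mul_zeta1 ha hb).summable.of_nonneg_of_le (fun _ ↦ by unfold zeta2Term; positivity)
    (zeta2Term_le_one_div_pow_mul_pow a b)

/-- Square `1 / (x * y) = (1 / x + 1 / y) / (x + y)` and apply it once more to the cross term. -/
theorem one_div_sq_mul_sq_eq_shuffle {K : Type*} [Field K] {x y : K} (hx : x ≠ 0) (hy : y ≠ 0)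
    (hxy : x + y ≠ 0) :
    1 / (x ^ 2 * y ^ 2) = 1 / ((x + y) ^ 2 * y ^ 2) + 1 / ((y + x) ^ 2 * x ^ 2)
      + 2 * (1 / ((x + y) ^ 3 * y ^ 1)) + 2 * (1 / ((y + x) ^ 3 * x ^ 1)) := by
  rw [add_comm y x]
  field_simp
  ring

theorem zeta1_two_mul_zeta1_two : zeta1 2 * zeta1 2 = 2 * zeta2 2 2 + 4 * zeta2 3 1 := by
  have h22 := summable_zeta2Term one_lt_two one_lt_two
  have h31 : Summable (zeta2Term 3 1) :=
    h22.of_nonneg_of_le (fun _ ↦ by unfold zeta2Term; positivity) (zeta2Term_succ_le 2 1)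
  have hpoint (p : ℕ+ × ℕ+) : 1 / ((p.1 : ℝ) ^ 2 * (p.2 : ℝ) ^ 2) =
      zeta2Term 2 2 p + zeta2Term 2 2 p.swap + 2 * zeta2Term 3 1 p + 2 * zeta2Term 3 1 p.swap :=
    one_div_sq_mul_sq_eq_shuffle (by positivity) (by positivity) (by positivity)
  rw [← (hasSum_zeta1_mul_zeta1 one_lt_two one_lt_two).tsum_eq, tsum_congr hpoint,
    h22.add h22.prod_symm |>.add (h31.mul_left 2) |>.tsum_add (h31.prod_symm.mul_left 2),
    h22.add h22.prod_symm |>.tsum_add (h31.mul_left 2), h22.tsum_add h22.prod_symm,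
    tsum_mul_left, tsum_mul_left, ← zeta2_eq_tsum_zeta2Term, ← zeta2_eq_tsum_zeta2Term_swap,
    ← zeta2_eq_tsum_zeta2Term, ← zeta2_eq_tsum_zeta2Term_swap]
  ring

theorem zeta_three_one :
    zeta2 3 1 = 3 / 2 * zeta1 4 - 1 / 2 * (zeta1 2) ^ 2 ∧
    zeta2 3 1 = Real.pi ^ 4 / 360 := by
  have stuffle : zeta1 2 * zeta1 2 = zeta2 2 2 + zeta2 2 2 + zeta1 4 :=
    zeta1_mul_zeta1 one_lt_two one_lt_two
  have shuffle := zeta1_two_mul_zeta1_two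
  have h2 : zeta1 2 = Real.pi ^ 2 / 6 := zeta1_eq_of_hasSum two_ne_zero hasSum_zeta_two
  have h4 : zeta1 4 = Real.pi ^ 4 / 90 := zeta1_eq_of_hasSum four_ne_zero hasSum_zeta_four
  have h31 : zeta2 3 1 = zeta1 4 / 4 := by linarith
  constructor
  · rw [h31, h2, h4]; ring
  · rw [h31, h4]; ring
end

section
/- The double zeta value ζ(3,2) equals −(11/2)ζ(5) + 3ζ(2)ζ(3). -/
namespace ZetaTT

noncomputable def F (a b c : ℕ) (p : ℕ+ × ℕ+) : ℝ :=
  1 / ((p.1 : ℝ) ^ a * (p.2 : ℝ) ^ b * ((p.1 : ℝ) + (p.2 : ℝ)) ^ c)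

noncomputable def T (a b c : ℕ) : ℝ := ∑' p : ℕ+ × ℕ+, F a b c p

lemma pnat_one_le (n : ℕ+) : (1 : ℝ) ≤ (n : ℝ) := by
  have := n.one_le
  exact_mod_cast this

lemma pnat_pos (n : ℕ+) : (0 : ℝ) < (n : ℝ) := lt_of_lt_of_le one_pos (pnat_one_le n)

lemma zsummable {k : ℕ} (hk : 2 ≤ k) : Summable (fun n : ℕ+ => 1 / (n : ℝ) ^ k) := by
  rw [← Equiv.pnatEquivNat.symm.summable_iff]
  have : Summable (fun n : ℕ => 1 / ((n : ℝ) ^ k)) := Real.summable_one_div_nat_pow.mpr hk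
  have h2 := (summable_nat_add_iff 1).mpr this
  apply h2.congr
  intro n
  simp [Equiv.pnatEquivNat, Function.comp, Nat.succPNat]

lemma sum22 : Summable (fun p : ℕ+ × ℕ+ => 1 / ((p.1 : ℝ) ^ 2 * (p.2 : ℝ) ^ 2)) := by
  have := Summable.mul_of_nonneg (zsummable (le_refl 2)) (zsummable (le_refl 2))
    (fun n => by positivity) (fun n => by positivity)
  apply this.congr
  intro p
  rw [div_mul_div_comm, one_mul]

lemma F_nonneg (a b c : ℕ) (p : ℕ+ × ℕ+) : 0 ≤ F a b c p := by
  unfold F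
  have h1 := pnat_pos p.1
  have h2 := pnat_pos p.2
  positivity

lemma summable_F (a b c : ℕ)
    (h : ∀ x y : ℝ, 1 ≤ x → 1 ≤ y → x ^ 2 * y ^ 2 ≤ x ^ a * y ^ b * (x + y) ^ c) :
    Summable (F a b c) := by
  apply Summable.of_nonneg_of_le (F_nonneg a b c) _ sum22
  intro p
  unfold F
  have h1 := pnat_one_le p.1
  have h2 := pnat_one_le p.2
  apply one_div_le_one_div_of_le (by positivity)
  exact h _ _ h1 h2

end ZetaTT

namespace ZetaTT

lemma bound_lemma {a b c i j : ℕ} (hij : i + j ≤ c) (ha : 2 ≤ a + i) (hb : 2 ≤ b + j)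
    (x y : ℝ) (hx : 1 ≤ x) (hy : 1 ≤ y) : x ^ 2 * y ^ 2 ≤ x ^ a * y ^ b * (x + y) ^ c := by
  have hx0 : (0:ℝ) ≤ x := by linarith
  have hy0 : (0:ℝ) ≤ y := by linarith
  have hxy : (1:ℝ) ≤ x + y := by linarith
  calc x ^ 2 * y ^ 2 ≤ x ^ (a+i) * y ^ (b+j) := by
        apply mul_le_mul (pow_le_pow_right₀ hx ha) (pow_le_pow_right₀ hy hb) (by positivity) (by positivity)
    _ = (x^a*y^b)*(x^i*y^j) := by rw [pow_add, pow_add]; ring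
    _ ≤ (x^a*y^b)*((x+y)^i*(x+y)^j) := by
        apply mul_le_mul_of_nonneg_left _ (by positivity)
        exact mul_le_mul (pow_le_pow_left₀ hx0 (by linarith) i)
          (pow_le_pow_left₀ hy0 (by linarith) j) (by positivity) (by positivity)
    _ = (x^a*y^b)*(x+y)^(i+j) := by rw [← pow_add]
    _ ≤ (x^a*y^b)*(x+y)^c :=
        mul_le_mul_of_nonneg_left (pow_le_pow_right₀ hxy hij) (by positivity)

lemma s230 : Summable (F 2 3 0) := summable_F _ _ _ (fun x y hx hy => bound_lemma (i:=0) (j:=0) (by norm_num) (by norm_num) (by norm_num) x y hx hy)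
lemma s131 : Summable (F 1 3 1) := summable_F _ _ _ (fun x y hx hy => bound_lemma (i:=1) (j:=0) (by norm_num) (by norm_num) (by norm_num) x y hx hy)
lemma s221 : Summable (F 2 2 1) := summable_F _ _ _ (fun x y hx hy => bound_lemma (i:=0) (j:=0) (by norm_num) (by norm_num) (by norm_num) x y hx hy)
lemma s122 : Summable (F 1 2 2) := summable_F _ _ _ (fun x y hx hy => bound_lemma (i:=1) (j:=0) (by norm_num) (by norm_num) (by norm_num) x y hx hy)
lemma s212 : Summable (F 2 1 2) := summable_F _ _ _ (fun x y hx hy => bound_lemma (i:=0) (j:=1) (by norm_num) (by norm_num) (by norm_num) x y hx hy)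
lemma s023 : Summable (F 0 2 3) := summable_F _ _ _ (fun x y hx hy => bound_lemma (i:=2) (j:=0) (by norm_num) (by norm_num) (by norm_num) x y hx hy)
lemma s113 : Summable (F 1 1 3) := summable_F _ _ _ (fun x y hx hy => bound_lemma (i:=1) (j:=1) (by norm_num) (by norm_num) (by norm_num) x y hx hy)
lemma s014 : Summable (F 0 1 4) := summable_F _ _ _ (fun x y hx hy => bound_lemma (i:=2) (j:=1) (by norm_num) (by norm_num) (by norm_num) x y hx hy)
lemma s104 : Summable (F 1 0 4) := summable_F _ _ _ (fun x y hx hy => bound_lemma (i:=1) (j:=2) (by norm_num) (by norm_num) (by norm_num) x y hx hy)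
lemma s032 : Summable (F 0 3 2) := summable_F _ _ _ (fun x y hx hy => bound_lemma (i:=2) (j:=0) (by norm_num) (by norm_num) (by norm_num) x y hx hy)

end ZetaTT

namespace ZetaTT

lemma F_rec (a b c : ℕ) (p : ℕ+ × ℕ+) :
    F (a+1) (b+1) c p = F a (b+1) (c+1) p + F (a+1) b (c+1) p := by
  unfold F
  have hx := pnat_pos p.1
  have hy := pnat_pos p.2
  set x := (p.1 : ℝ)
  set y := (p.2 : ℝ)
  have hxy : 0 < x + y := by linarith
  field_simp
  ring

lemma T_rec {a b c : ℕ} (h1 : Summable (F a (b+1) (c+1))) (h2 : Summable (F (a+1) b (c+1))) :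
    T (a+1) (b+1) c = T a (b+1) (c+1) + T (a+1) b (c+1) := by
  unfold T
  rw [← Summable.tsum_add h1 h2]
  exact tsum_congr (F_rec a b c)

lemma T_symm (a b c : ℕ) : T a b c = T b a c := by
  unfold T
  rw [← (Equiv.prodComm ℕ+ ℕ+).tsum_eq (F b a c)]
  apply tsum_congr
  intro p
  unfold F
  simp [Equiv.prodComm]
  ring_nf

end ZetaTT

namespace ZetaTT

def egt : (ℕ+ × ℕ+) ≃ {p : ℕ+ × ℕ+ // p.2 < p.1} where
  toFun q := ⟨(q.1 + q.2, q.2), PNat.lt_add_left _ _⟩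
  invFun q := (q.1.1 - q.1.2, q.1.2)
  left_inv q := by
    obtain ⟨k, j⟩ := q
    simp only []
    congr 1
    apply PNat.coe_injective
    rw [PNat.sub_coe, if_pos (PNat.lt_add_left j k)]
    push_cast
    omega
  right_inv q := by
    obtain ⟨⟨m, n⟩, h⟩ := q
    apply Subtype.ext
    simp only [] at h ⊢
    have := PNat.sub_add_of_lt h
    exact Prod.ext this rfl

def ediag : ℕ+ ≃ {p : ℕ+ × ℕ+ // p.1 = p.2} where
  toFun d := ⟨(d, d), rfl⟩
  invFun q := q.1.1
  left_inv d := rfl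
  right_inv q := by
    obtain ⟨⟨m, n⟩, h⟩ := q
    apply Subtype.ext
    simp only [] at h ⊢
    exact Prod.ext rfl h

lemma trichotomy {g : ℕ+ × ℕ+ → ℝ} (hg : Summable g) :
    ∑' p : ℕ+ × ℕ+, g p
      = (∑' q : {p : ℕ+ × ℕ+ // p.2 < p.1}, g q.1)
        + (∑' q : {p : ℕ+ × ℕ+ // p.1 < p.2}, g q.1)
        + (∑' q : {p : ℕ+ × ℕ+ // p.1 = p.2}, g q.1) := by
  classical
  have hset : ({p : ℕ+ × ℕ+ | p.2 < p.1}ᶜ : Set (ℕ+ × ℕ+))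
      = {p : ℕ+ × ℕ+ | p.1 < p.2} ∪ {p : ℕ+ × ℕ+ | p.1 = p.2} := by
    ext p
    simp only [Set.mem_compl_iff, Set.mem_setOf_eq, Set.mem_union, not_lt]
    constructor
    · intro h
      rcases lt_or_eq_of_le h with h' | h'
      · exact Or.inl h'
      · exact Or.inr h'
    · rintro (h | h)
      · exact le_of_lt h
      · exact le_of_eq h
  have hd : Disjoint {p : ℕ+ × ℕ+ | p.1 < p.2} {p : ℕ+ × ℕ+ | p.1 = p.2} := by
    rw [Set.disjoint_left]
    intro p hp hp'
    simp only [Set.mem_setOf_eq] at hp hp'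
    exact absurd hp' (ne_of_lt hp)
  have h1 := Summable.tsum_add_tsum_compl (f := g) (s := {p : ℕ+ × ℕ+ | p.2 < p.1})
    (hg.subtype _) (hg.subtype _)
  rw [← h1]
  rw [tsum_congr_set_coe g hset, Summable.tsum_union_disjoint hd (hg.subtype _) (hg.subtype _)]
  rw [← add_assoc]
  rfl

end ZetaTT

namespace ZetaTT

abbrev Z2 := {p : ℕ × ℕ // p.2 < p.1 ∧ 0 < p.2}

def ezg : Z2 ≃ {p : ℕ+ × ℕ+ // p.2 < p.1} where
  toFun q := ⟨(⟨q.1.1, lt_trans q.2.2 q.2.1⟩, ⟨q.1.2, q.2.2⟩), q.2.1⟩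
  invFun q := ⟨((q.1.1 : ℕ), (q.1.2 : ℕ)), ⟨q.2, q.1.2.pos⟩⟩
  left_inv q := by
    obtain ⟨⟨a, b⟩, h⟩ := q
    rfl
  right_inv q := by
    obtain ⟨⟨m, n⟩, h⟩ := q
    rfl

def ezl : Z2 ≃ {p : ℕ+ × ℕ+ // p.1 < p.2} where
  toFun q := ⟨(⟨q.1.2, q.2.2⟩, ⟨q.1.1, lt_trans q.2.2 q.2.1⟩), q.2.1⟩
  invFun q := ⟨((q.1.2 : ℕ), (q.1.1 : ℕ)), ⟨q.2, q.1.1.pos⟩⟩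
  left_inv q := by
    obtain ⟨⟨a, b⟩, h⟩ := q
    rfl
  right_inv q := by
    obtain ⟨⟨m, n⟩, h⟩ := q
    rfl

lemma zeta2_eq_gt (a b : ℕ) :
    zeta2 a b = ∑' q : {p : ℕ+ × ℕ+ // p.2 < p.1}, 1 / ((q.1.1 : ℝ) ^ a * (q.1.2 : ℝ) ^ b) := by
  unfold zeta2
  rw [← ezg.tsum_eq]
  apply tsum_congr
  intro q
  rfl

lemma zeta2_eq_lt (a b : ℕ) :
    zeta2 a b = ∑' q : {p : ℕ+ × ℕ+ // p.1 < p.2}, 1 / ((q.1.2 : ℝ) ^ a * (q.1.1 : ℝ) ^ b) := by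
  unfold zeta2
  rw [← ezl.tsum_eq]
  apply tsum_congr
  intro q
  rfl

lemma zeta2_eq_T (a b : ℕ) : zeta2 a b = T 0 b a := by
  rw [zeta2_eq_gt, T]
  rw [← egt.tsum_eq (fun q : {p : ℕ+ × ℕ+ // p.2 < p.1} => 1 / ((q.1.1 : ℝ) ^ a * (q.1.2 : ℝ) ^ b))]
  apply tsum_congr
  intro p
  show 1 / ((((p.1 + p.2 : ℕ+)) : ℝ) ^ a * ((p.2 : ℝ)) ^ b) = F 0 b a p
  symm
  unfold F
  have : (((p.1 + p.2 : ℕ+)) : ℝ) = (p.1 : ℝ) + (p.2 : ℝ) := by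
    push_cast
    ring
  rw [this, pow_zero]
  ring_nf

end ZetaTT

namespace ZetaTT

lemma prod_eq {a b : ℕ} (ha : 2 ≤ a) (hb : 2 ≤ b) :
    zeta1 a * zeta1 b = T a b 0 := by
  unfold zeta1 T
  have hsa : Summable fun n : ℕ+ => ‖1 / (n : ℝ) ^ a‖ := by
    apply (zsummable ha).congr
    intro n
    rw [Real.norm_eq_abs, abs_of_nonneg (by positivity)]
  have hsb : Summable fun n : ℕ+ => ‖1 / (n : ℝ) ^ b‖ := by
    apply (zsummable hb).congr
    intro n
    rw [Real.norm_eq_abs, abs_of_nonneg (by positivity)]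
  rw [tsum_mul_tsum_of_summable_norm hsa hsb]
  apply tsum_congr
  intro p
  unfold F
  rw [pow_zero, mul_one, div_mul_div_comm, one_mul]

lemma diag_eq : (∑' q : {p : ℕ+ × ℕ+ // p.1 = p.2}, F 2 3 0 q.1) = zeta1 5 := by
  rw [← ediag.tsum_eq fun q : {p : ℕ+ × ℕ+ // p.1 = p.2} => F 2 3 0 q.1]
  unfold zeta1
  apply tsum_congr
  intro d
  show F 2 3 0 (d, d) = _
  unfold F
  rw [pow_zero, mul_one, ← pow_add]

lemma stuffle : T 2 3 0 = zeta2 2 3 + zeta2 3 2 + zeta1 5 := by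
  unfold T
  rw [trichotomy s230, zeta2_eq_gt 2 3, zeta2_eq_lt 3 2, diag_eq]
  congr 2
  · apply tsum_congr
    intro q
    unfold F
    rw [pow_zero, mul_one]
  · apply tsum_congr
    intro q
    unfold F
    rw [pow_zero, mul_one]
    ring_nf

end ZetaTT

namespace ZetaTT

lemma telescope (m : ℕ+) :
    HasSum (fun k : ℕ+ => 1 / (k : ℝ) - 1 / ((k : ℝ) + (m : ℝ)))
      (∑ j ∈ Finset.Icc 1 (m : ℕ), 1 / (j : ℝ)) := by
  set M : ℕ := (m : ℕ) with hM
  set h : ℕ → ℝ := fun n => 1 / ((n : ℝ) + 1) with hh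
  set f : ℕ → ℝ := fun n => h n - h (M + n) with hf
  have hfnonneg : ∀ n, 0 ≤ f n := by
    intro n
    simp only [hf, hh]
    have : (1:ℝ) / ((M:ℝ) + (n:ℝ) + 1) ≤ 1 / ((n:ℝ) + 1) := by
      apply one_div_le_one_div_of_le (by positivity)
      have : (0:ℝ) ≤ (M:ℝ) := by positivity
      linarith
    push_cast
    push_cast at this
    linarith
  -- partial sums
  have hS : ∀ K : ℕ, ∑ n ∈ Finset.range K, f n
      = (∑ n ∈ Finset.range M, h n) - ∑ n ∈ Finset.Ico K (M + K), h n := by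
    intro K
    rw [hf, Finset.sum_sub_distrib]
    have h1 : ∑ n ∈ Finset.range K, h (M + n) = ∑ n ∈ Finset.Ico M (M + K), h n := by
      rw [Finset.sum_Ico_eq_sum_range]
      simp
    have h2 : (∑ n ∈ Finset.range M, h n) + ∑ n ∈ Finset.Ico M (M + K), h n
        = ∑ n ∈ Finset.range (M + K), h n := by
      simp only [Finset.range_eq_Ico]
      exact Finset.sum_Ico_consecutive h (Nat.zero_le M) (Nat.le_add_right M K)
    have h3 : (∑ n ∈ Finset.range K, h n) + ∑ n ∈ Finset.Ico K (M + K), h n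
        = ∑ n ∈ Finset.range (M + K), h n := by
      simp only [Finset.range_eq_Ico]
      exact Finset.sum_Ico_consecutive h (Nat.zero_le K) (by omega)
    rw [h1]
    linarith
  -- tail bound
  have htail : Filter.Tendsto (fun K => ∑ n ∈ Finset.Ico K (M + K), h n)
      Filter.atTop (nhds 0) := by
    apply tendsto_of_tendsto_of_tendsto_of_le_of_le (g := fun _ : ℕ => (0:ℝ))
      (h := fun K : ℕ => (M : ℝ) / ((K : ℝ) + 1))
    · exact tendsto_const_nhds
    · have := (tendsto_const_div_atTop_nhds_zero_nat (M : ℝ)).comp (Filter.tendsto_add_atTop_nat 1)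
      apply this.congr
      intro K
      simp only [Function.comp]
      push_cast
      ring_nf
    · intro K
      apply Finset.sum_nonneg
      intro i _
      simp only [hh]
      positivity
    · intro K
      calc ∑ n ∈ Finset.Ico K (M + K), h n
          ≤ ∑ _n ∈ Finset.Ico K (M + K), 1 / ((K : ℝ) + 1) := by
            apply Finset.sum_le_sum
            intro i hi
            simp only [Finset.mem_Ico] at hi
            simp only [hh]
            apply one_div_le_one_div_of_le (by positivity)
            have : (K:ℝ) ≤ (i:ℝ) := by exact_mod_cast hi.1
            linarith
        _ = (M : ℝ) / ((K : ℝ) + 1) := by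
            rw [Finset.sum_const, Nat.card_Ico]
            have : M + K - K = M := by omega
            rw [this]
            rw [nsmul_eq_mul]
            ring
  have htendsto : Filter.Tendsto (fun K => ∑ n ∈ Finset.range K, f n)
      Filter.atTop (nhds (∑ n ∈ Finset.range M, h n)) := by
    have := (tendsto_const_nhds (x := ∑ n ∈ Finset.range M, h n)
      (f := Filter.atTop (α := ℕ))).sub htail
    rw [sub_zero] at this
    apply this.congr
    intro K
    rw [hS K]
  have hHasSumNat : HasSum f (∑ n ∈ Finset.range M, h n) :=
    (hasSum_iff_tendsto_nat_of_nonneg hfnonneg _).mpr htendsto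
  -- transfer to ℕ+
  have key : HasSum (fun k : ℕ+ => 1 / (k : ℝ) - 1 / ((k : ℝ) + (m : ℝ)))
      (∑ n ∈ Finset.range M, h n) := by
    rw [← Equiv.pnatEquivNat.symm.hasSum_iff]
    have heq : ((fun k : ℕ+ => 1 / (k : ℝ) - 1 / ((k : ℝ) + (m : ℝ)))
        ∘ Equiv.pnatEquivNat.symm) = f := by
      funext n
      simp only [Function.comp, Equiv.pnatEquivNat, Equiv.coe_fn_symm_mk, hf, hh]
      have c1 : ((Nat.succPNat n : ℕ+) : ℝ) = (n : ℝ) + 1 := by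
        have : ((Nat.succPNat n : ℕ+) : ℕ) = n + 1 := rfl
        rw [show ((Nat.succPNat n : ℕ+) : ℝ) = (((Nat.succPNat n : ℕ+) : ℕ) : ℝ) from rfl, this]
        push_cast
        ring
      rw [c1]
      have c2 : ((n : ℝ) + 1) + (m : ℝ) = ((M + n : ℕ) : ℝ) + 1 := by
        rw [hM]
        push_cast
        ring
      rw [c2]
    rw [heq]
    exact hHasSumNat
  have hfin : (∑ n ∈ Finset.range M, h n) = ∑ j ∈ Finset.Icc 1 M, 1 / (j : ℝ) := by
    rw [← Finset.Ico_add_one_right_eq_Icc, Finset.sum_Ico_eq_sum_range]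
    simp only [hh]
    apply Finset.sum_congr
    · congr 1
    · intro i _
      push_cast
      ring_nf
  rw [← hfin]
  exact key

end ZetaTT

namespace ZetaTT

lemma s311 : Summable (F 3 1 1) := summable_F _ _ _ (fun x y hx hy => bound_lemma (i:=0) (j:=1) (by norm_num) (by norm_num) (by norm_num) x y hx hy)

def esig : (ℕ+ × ℕ+) ≃ Σ m : ℕ+, ↥(Finset.Ioo 0 (m : ℕ)) where
  toFun q := ⟨q.1 + q.2, ⟨(q.2 : ℕ), by
    rw [Finset.mem_Ioo]
    refine ⟨q.2.pos, ?_⟩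
    rw [PNat.add_coe]
    have := q.1.pos
    omega⟩⟩
  invFun x := (⟨(x.1 : ℕ) - x.2.1, by
      have := (Finset.mem_Ioo.mp x.2.2)
      omega⟩, ⟨x.2.1, (Finset.mem_Ioo.mp x.2.2).1⟩)
  left_inv q := by
    obtain ⟨k, j⟩ := q
    simp only []
    congr 1
    · apply PNat.coe_injective
      simp only [PNat.mk_coe, PNat.add_coe]
      omega
  right_inv x := by
    obtain ⟨m, ⟨j, hj⟩⟩ := x
    have hj' := Finset.mem_Ioo.mp hj
    apply Sigma.subtype_ext
    · apply PNat.coe_injective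
      show (m : ℕ) - j + j = (m : ℕ)
      omega
    · rfl

noncomputable def G : (Σ m : ℕ+, ↥(Finset.Ioo 0 (m : ℕ))) → ℝ :=
  fun x => 1 / ((x.2.1 : ℝ) * (x.1 : ℝ) ^ 4)

lemma G_comp : ∀ q : ℕ+ × ℕ+, G (esig q) = F 0 1 4 q := by
  intro q
  unfold G F esig
  simp only [Equiv.coe_fn_mk]
  have : (((q.1 + q.2 : ℕ+)) : ℝ) = (q.1 : ℝ) + (q.2 : ℝ) := by push_cast; ring
  rw [this]
  ring_nf

lemma hG : Summable G := by
  rw [← esig.summable_iff]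
  exact s014.congr (fun q => (G_comp q).symm)

noncomputable def HIoo (m : ℕ+) : ℝ := ∑ j ∈ Finset.Ioo 0 (m : ℕ), 1 / (j : ℝ)
noncomputable def HIcc (m : ℕ+) : ℝ := ∑ j ∈ Finset.Icc 1 (m : ℕ), 1 / (j : ℝ)

lemma inner_G (m : ℕ+) : ∑' c : ↥(Finset.Ioo 0 (m : ℕ)), G ⟨m, c⟩ = (1 / (m : ℝ) ^ 4) * HIoo m := by
  have h0 : ∑' c : ↥(Finset.Ioo 0 (m : ℕ)), G ⟨m, c⟩
      = ∑ j ∈ Finset.Ioo 0 (m : ℕ), 1 / ((j : ℝ) * (m : ℝ) ^ 4) :=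
    Finset.tsum_subtype (Finset.Ioo 0 (m : ℕ)) (fun j => 1 / ((j : ℝ) * (m : ℝ) ^ 4))
  rw [h0]
  unfold HIoo
  rw [Finset.mul_sum]
  apply Finset.sum_congr rfl
  intro j hj
  have hj' := (Finset.mem_Ioo.mp hj).1
  have hjr : (0:ℝ) < (j : ℝ) := by exact_mod_cast hj'
  have hm := pnat_pos m
  field_simp

lemma T014_group : T 0 1 4 = ∑' m : ℕ+, (1 / (m : ℝ) ^ 4) * HIoo m := by
  unfold T
  rw [← tsum_congr G_comp, esig.tsum_eq G,
    Summable.tsum_sigma' (fun b => hG.sigma_factor b) hG]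
  exact tsum_congr inner_G

lemma sum_HIoo_summable : Summable (fun m : ℕ+ => (1 / (m : ℝ) ^ 4) * HIoo m) := by
  have := hG.sigma
  apply this.congr
  intro m
  exact inner_G m

lemma HIcc_eq (m : ℕ+) : HIcc m = HIoo m + 1 / (m : ℝ) := by
  unfold HIcc HIoo
  have h1 : Finset.Icc 1 (m : ℕ) = insert (m : ℕ) (Finset.Ioo 0 (m : ℕ)) := by
    ext x
    simp only [Finset.mem_Icc, Finset.mem_insert, Finset.mem_Ioo]
    have := m.pos
    omega
  rw [h1, Finset.sum_insert (by simp)]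
  ring

lemma T131_eq : T 1 3 1 = T 0 1 4 + zeta1 5 := by
  have step1 : T 1 3 1 = ∑' m : ℕ+, (1 / (m : ℝ) ^ 4) * HIcc m := by
    rw [T_symm, T]
    rw [Summable.tsum_prod' s311 (fun b => s311.prod_factor b)]
    apply tsum_congr
    intro m
    have inner : ∀ k : ℕ+, F 3 1 1 (m, k)
        = (1 / (m : ℝ) ^ 4) * (1 / (k : ℝ) - 1 / ((k : ℝ) + (m : ℝ))) := by
      intro k
      unfold F
      have hm := pnat_pos m
      have hk := pnat_pos k
      field_simp
      ring
    rw [tsum_congr inner, tsum_mul_left, (telescope m).tsum_eq]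
    rfl
  rw [step1, T014_group]
  have : ∀ m : ℕ+, (1 / (m : ℝ) ^ 4) * HIcc m
      = (1 / (m : ℝ) ^ 4) * HIoo m + 1 / (m : ℝ) ^ 5 := by
    intro m
    rw [HIcc_eq]
    have hm := pnat_pos m
    field_simp
  rw [tsum_congr this, Summable.tsum_add sum_HIoo_summable (zsummable (by norm_num))]
  rfl

end ZetaTT

open ZetaTT in
theorem zeta_three_two :
    zeta2 3 2 = -(11 / 2) * zeta1 5 + 3 * zeta1 2 * zeta1 3 := by
  have hA : zeta2 2 3 = T 0 3 2 := zeta2_eq_T 2 3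
  have hB : zeta2 3 2 = T 0 2 3 := zeta2_eq_T 3 2
  have hP : zeta1 2 * zeta1 3 = T 2 3 0 := prod_eq (by norm_num) (by norm_num)
  have hst : T 2 3 0 = zeta2 2 3 + zeta2 3 2 + zeta1 5 := stuffle
  have rec1 : T 2 3 0 = T 1 3 1 + T 2 2 1 := T_rec s131 s221
  have rec2 : T 2 2 1 = T 1 2 2 + T 2 1 2 := T_rec s122 s212
  have sym1 : T 2 1 2 = T 1 2 2 := T_symm 2 1 2
  have rec3 : T 1 2 2 = T 0 2 3 + T 1 1 3 := T_rec s023 s113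
  have rec4 : T 1 1 3 = T 0 1 4 + T 1 0 4 := T_rec s014 s104
  have sym2 : T 1 0 4 = T 0 1 4 := T_symm 1 0 4
  have rec5 : T 1 3 1 = T 0 3 2 + T 1 2 2 := T_rec s032 s122
  have e3 : T 1 3 1 = T 0 1 4 + zeta1 5 := T131_eq
  linarith
end
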